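/- In the braid group B_4, the word σ1⁻¹ σ1⁻¹ σ1⁻¹ σ2 σ1⁻¹ σ2 σ3⁻¹ σ2⁻¹ σ1 σ2⁻¹ σ3⁻¹ (a braid representative of the knot 11n122) equals the product of the negative bands of its negative band decomposition with band centers {1, 2, 3, 7, 11}; in particular, this braid is quasinegative. -/

import Mathlib

/-- The Artin relations for the braid group with `m` generators
`σ_1, …, σ_m` (indexed by `Fin m`), i.e. the braid group `B_{m+1}`:
`σ_i σ_j = σ_j σ_i` for `|i - j| ≥ 2`, and
`σ_i σ_{i+1} σ_i = σ_{i+1} σ_i σ_{i+1}`. -/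
def braidRels (m : ℕ) : Set (FreeGroup (Fin m)) :=
  { r | (∃ i j : Fin m, (i : ℕ) + 2 ≤ (j : ℕ) ∧
          r = FreeGroup.of i * FreeGroup.of j * (FreeGroup.of i)⁻¹ * (FreeGroup.of j)⁻¹) ∨
        (∃ i j : Fin m, (i : ℕ) + 1 = (j : ℕ) ∧
          r = FreeGroup.of i * FreeGroup.of j * FreeGroup.of i *
              (FreeGroup.of j)⁻¹ * (FreeGroup.of i)⁻¹ * (FreeGroup.of j)⁻¹) }

/-- The braid group `B_{m+1}`, presented with `m` Artin generators.
Here index `i : Fin m` corresponds to the Artin generator `σ_{i+1}`. -/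
abbrev BraidGrp (m : ℕ) := PresentedGroup (braidRels m)

/-- The Artin generator `σ_{i+1}` of the braid group `B_{m+1}`. -/
def σ {m : ℕ} (i : Fin m) : BraidGrp m := PresentedGroup.of i

/-- A letter of a braid word: a generator index together with a sign
(`true` = the positive generator, `false` = its inverse). -/
abbrev Letter (m : ℕ) := Fin m × Bool

/-- The group element represented by a letter. -/
def letterEl {m : ℕ} (x : Letter m) : BraidGrp m :=
  if x.2 then σ x.1 else (σ x.1)⁻¹

/-- The group element represented by a braid word. -/
def wordProd {m : ℕ} (w : List (Letter m)) : BraidGrp m :=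
  (w.map letterEl).prod

/-- The band of the band decomposition of the word `w` with band centers `S`
(1-based positions) at center `p`: namely `α_p * x_p * α_p⁻¹`, where `x_p` is
the letter of `w` at position `p` and `α_p` is the product, in increasing
order of position, of the letters of `w` at positions `q < p` with `q ∉ S`. -/
def band {m : ℕ} (w : List (Letter m)) (S : List ℕ) (p : ℕ) : BraidGrp m :=
  let α : BraidGrp m :=
    wordProd (((w.zipIdx.map Prod.swap).filter fun qx => decide (qx.1 + 1 < p ∧ qx.1 + 1 ∉ S)).map Prod.snd)
  match w[p - 1]? with
  | some x => α * letterEl x * α⁻¹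
  | none => 1

/-- The product, in increasing order of band center, of the bands of the
band decomposition of the word `w` with band centers `S`. -/
def bandProd {m : ℕ} (w : List (Letter m)) (S : List ℕ) : BraidGrp m :=
  (S.map (band w S)).prod

/-- A positive band in the braid group: a conjugate `α σ_j α⁻¹` of a generator. -/
def IsPositiveBand {m : ℕ} (x : BraidGrp m) : Prop :=
  ∃ (α : BraidGrp m) (j : Fin m), x = α * σ j * α⁻¹

/-- A braid is quasipositive if it is a product of positive bands. -/
def IsQuasipositive {m : ℕ} (x : BraidGrp m) : Prop :=
  ∃ l : List (BraidGrp m), (∀ b ∈ l, IsPositiveBand b) ∧ x = l.prod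

/-- A negative band in the braid group: a conjugate `α σ_j⁻¹ α⁻¹` of the
inverse of a generator. -/
def IsNegativeBand {m : ℕ} (x : BraidGrp m) : Prop :=
  ∃ (α : BraidGrp m) (j : Fin m), x = α * (σ j)⁻¹ * α⁻¹

/-- A braid is quasinegative if it is a product of negative bands. -/
def IsQuasinegative {m : ℕ} (x : BraidGrp m) : Prop :=
  ∃ l : List (BraidGrp m), (∀ b ∈ l, IsNegativeBand b) ∧ x = l.prod

/-- The braid word for the knot `11n122` (letter `(i, true)` is `σ_(i+1)`,
`(i, false)` is `σ_(i+1)⁻¹`). -/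
def theWord : List (Letter 3) :=
  [(0, false), (0, false), (0, false), (1, true), (0, false), (1, true), (2, false), (1, false), (0, true), (1, false), (2, false)]

/-- The band centers. -/
def theCenters : List ℕ := [1, 2, 3, 7, 11]

lemma isNegativeBand_band {m : ℕ} {w : List (Letter m)} {p : ℕ} {j : Fin m} (S : List ℕ)
    (hp : w[p - 1]? = some (j, false)) : IsNegativeBand (band w S p) := by
  simp only [band, hp]
  exact ⟨_, j, rfl⟩

lemma isQuasinegative_bandProd {m : ℕ} {w : List (Letter m)} {S : List ℕ}
    (hS : ∀ p ∈ S, ∃ j, w[p - 1]? = some (j, false)) : IsQuasinegative (bandProd w S) := by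
  refine ⟨S.map (band w S), ?_, rfl⟩
  intro b hb
  obtain ⟨p, hp, rfl⟩ := List.mem_map.1 hb
  obtain ⟨j, hj⟩ := hS p hp
  exact isNegativeBand_band S hj

lemma wordProd_theWord : wordProd theWord =
    (σ 0)⁻¹ * (σ 0)⁻¹ * (σ 0)⁻¹ * σ 1 * (σ 0)⁻¹ * σ 1 * (σ 2)⁻¹ *
      (σ 1)⁻¹ * σ 0 * (σ 1)⁻¹ * (σ 2)⁻¹ :=
  rfl

lemma bandProd_theWord_theCenters : bandProd theWord theCenters =
    (σ 0)⁻¹ * (σ 0)⁻¹ * (σ 0)⁻¹ *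
      ((σ 1 * (σ 0)⁻¹ * σ 1) * (σ 2)⁻¹ * (σ 1 * (σ 0)⁻¹ * σ 1)⁻¹) *
      ((σ 1 * (σ 0)⁻¹ * σ 1 * (σ 1)⁻¹ * σ 0 * (σ 1)⁻¹) * (σ 2)⁻¹ *
        (σ 1 * (σ 0)⁻¹ * σ 1 * (σ 1)⁻¹ * σ 0 * (σ 1)⁻¹)⁻¹) :=
  rfl

/- The conjugators telescope, leaving the inverse of the last conjugator
`σ 1 * (σ 0)⁻¹ * σ 1 * (σ 1)⁻¹ * σ 0 * (σ 1)⁻¹`, which is already trivial in the free group. -/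
lemma wordProd_theWord_eq_bandProd : wordProd theWord = bandProd theWord theCenters := by
  rw [wordProd_theWord, bandProd_theWord_theCenters]
  group

/-- The braid representative of `11n122` equals the product of the bands of its
band decomposition with the given band centers; in particular it is quasinegative. -/
theorem knot_11n122_quasinegative :
    wordProd theWord = bandProd theWord theCenters ∧
      IsQuasinegative (wordProd theWord) := by
  refine ⟨wordProd_theWord_eq_bandProd, ?_⟩
  rw [wordProd_theWord_eq_bandProd]
  exact isQuasinegative_bandProd (by decide)
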